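/- arXiv:2106.01130 — 5 statements merged into one kernel-verified Lean document; each statement's English description precedes it below -/
import Mathlib

section
/- Fix real numbers t₀ < t, an integer m ≥ 0, and a continuous function g : [t₀, t] → ℝ. Define for s > 0 the quantity D_m(s) := (1/(2s)) ∫_{t₀}^t exp(−(t−t₁)/s) · exp(∫_{t₁}^t g(u) du) · (t−t₁)^m dt₁. Then lim_{s → 0⁺} D_m(s) = 1/2 if m = 0, and lim_{s → 0⁺} D_m(s) = 0 if m ≥ 1. -/
/-!
Substituting `t₁ = t - s v` turns `D_m(s)` into `(s^m / 2) ∫₀^∞ e^{-v} H(s v) v^m dv`, where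
`H(r) = exp (∫_{t-r}^t g)` on `[0, t - t₀]` and `H = 0` beyond. `H` is bounded and continuous at
`0⁺` with `H 0 = 1`, so by dominated convergence the integral tends to `Γ(m + 1) = m!`, and
`D_m(s) → 0^m m! / 2`.
-/

open Filter Topology MeasureTheory Set Real
open scoped Nat

lemma integrableOn_exp_neg_mul_pow_Ioi (m : ℕ) :
    IntegrableOn (fun v : ℝ => exp (-v) * v ^ m) (Ioi 0) := by
  simpa [rpow_natCast] using GammaIntegral_convergent (s := (m : ℝ) + 1) (by positivity)

lemma integral_exp_neg_mul_pow_Ioi (m : ℕ) :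
    ∫ v in Ioi (0 : ℝ), exp (-v) * v ^ m = m ! := by
  rw [← Gamma_nat_eq_factorial, Gamma_eq_integral (by positivity)]
  simp [rpow_natCast]

theorem tendsto_integral_exp_neg_mul_comp_mul_pow {H : ℝ → ℝ} (hH : Measurable H) {C : ℝ}
    (hC : ∀ r, |H r| ≤ C) (h0 : ContinuousWithinAt H (Ioi 0) 0) (m : ℕ) :
    Tendsto (fun s => ∫ v in Ioi 0, exp (-v) * H (s * v) * v ^ m) (𝓝[>] 0)
      (𝓝 (m ! * H 0)) := by
  have hlim : ∫ v in Ioi 0, exp (-v) * H 0 * v ^ m = m ! * H 0 := by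
    simp_rw [mul_right_comm _ (H 0)]
    rw [integral_mul_const, integral_exp_neg_mul_pow_Ioi]
  rw [← hlim]
  refine tendsto_integral_filter_of_dominated_convergence (fun v => C * (exp (-v) * v ^ m))
    (Eventually.of_forall fun s => Measurable.aestronglyMeasurable (by fun_prop))
    (Eventually.of_forall fun s => ?_) ((integrableOn_exp_neg_mul_pow_Ioi m).const_mul C) ?_
  · filter_upwards [ae_restrict_mem measurableSet_Ioi] with v (hv : 0 < v)
    calc ‖exp (-v) * H (s * v) * v ^ m‖ = exp (-v) * |H (s * v)| * v ^ m := by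
          rw [Real.norm_eq_abs, abs_mul, abs_mul, abs_of_pos (exp_pos _),
            abs_of_nonneg (pow_nonneg hv.le m)]
      _ ≤ exp (-v) * C * v ^ m := by gcongr; exact hC _
      _ = C * (exp (-v) * v ^ m) := by ring
  · filter_upwards [ae_restrict_mem measurableSet_Ioi] with v (hv : 0 < v)
    have hscale : Tendsto (fun s => s * v) (𝓝[>] 0) (𝓝[>] 0) :=
      tendsto_nhdsWithin_iff.2 ⟨((continuous_mul_const v).tendsto' 0 0 (zero_mul v)).mono_left
        nhdsWithin_le_nhds, eventually_nhdsWithin_of_forall fun s hs => mul_pos hs hv⟩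
    exact ((h0.tendsto.comp hscale).const_mul _).mul_const _

theorem tendsto_integral_exp_neg_mul_indicator_comp_mul_pow {T : ℝ} (hT : 0 < T) {h : ℝ → ℝ}
    (hh : ContinuousOn h (Icc 0 T)) (m : ℕ) :
    Tendsto (fun s => ∫ v in Ioi 0, exp (-v) * (Icc 0 T).indicator h (s * v) * v ^ m)
      (𝓝[>] 0) (𝓝 (m ! * h 0)) := by
  have hmem : (0 : ℝ) ∈ Icc 0 T := ⟨le_rfl, hT.le⟩
  obtain ⟨C, hC⟩ := isCompact_Icc.exists_bound_of_continuousOn hh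
  have hbound : ∀ r, |(Icc 0 T).indicator h r| ≤ C := fun r => by
    by_cases hr : r ∈ Icc 0 T
    · simpa [hr] using hC r hr
    · simpa [hr] using (norm_nonneg _).trans (hC 0 hmem)
  have hcont : ContinuousWithinAt ((Icc 0 T).indicator h) (Ioi 0) 0 := by
    have hIcc : Icc 0 T ∈ 𝓝[>] (0 : ℝ) := Icc_mem_nhdsGT hT
    refine ((hh 0 hmem).mono_of_mem_nhdsWithin hIcc).congr_of_eventuallyEq ?_
      (indicator_of_mem hmem h)
    filter_upwards [hIcc] with r hr using indicator_of_mem hr h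
  simpa [indicator_of_mem hmem] using tendsto_integral_exp_neg_mul_comp_mul_pow
    (by classical simpa only [piecewise_eq_indicator] using
      hh.measurable_piecewise (g := 0) continuousOn_const measurableSet_Icc) hbound hcont m

theorem integral_Ioi_exp_neg_div_mul_pow {s : ℝ} (hs : 0 < s) (H : ℝ → ℝ) (m : ℕ) :
    ∫ r in Ioi 0, exp (-r / s) * H r * r ^ m
      = s ^ (m + 1) * ∫ v in Ioi 0, exp (-v) * H (s * v) * v ^ m := by
  have hsubst := integral_comp_mul_left_Ioi' (fun r => exp (-r / s) * H r * r ^ m) 0 hs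
  rw [mul_zero] at hsubst
  rw [← hsubst, smul_eq_mul, pow_succ', mul_assoc, ← integral_const_mul (s ^ m)]
  refine congrArg (s * ·) (integral_congr_ae (Eventually.of_forall fun v => ?_))
  dsimp only
  rw [neg_div, mul_div_cancel_left₀ _ hs.ne', mul_pow]
  ring

theorem intervalIntegral_eq_integral_Ioi_indicator {T : ℝ} (hT : 0 ≤ T) (u h w : ℝ → ℝ) :
    ∫ r in 0..T, u r * h r * w r = ∫ r in Ioi 0, u r * (Icc 0 T).indicator h r * w r := by
  rw [intervalIntegral.integral_of_le hT, setIntegral_eq_of_subset_of_forall_sdiff_eq_zero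
    measurableSet_Ioi Ioc_subset_Ioi_self]
  · exact setIntegral_congr_fun measurableSet_Ioc fun r hr => by
      rw [indicator_of_mem (Ioc_subset_Icc_self hr)]
  · rintro r ⟨hr0 : 0 < r, hrT⟩
    rw [indicator_of_notMem fun hr => hrT ⟨hr0, hr.2⟩, mul_zero, zero_mul]

theorem continuousOn_exp_integral_sub_left {t₀ t : ℝ} (hlt : t₀ ≤ t) {g : ℝ → ℝ}
    (hg : ContinuousOn g (Icc t₀ t)) :
    ContinuousOn (fun r => exp (∫ u in (t - r)..t, g u)) (Icc 0 (t - t₀)) := by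
  have hprim := intervalIntegral.continuousOn_primitive_interval_left (μ := volume)
    (uIcc_of_le hlt ▸ hg.integrableOn_Icc : IntegrableOn g (uIcc t₀ t))
  refine (hprim.comp (by fun_prop) fun r hr => ?_).rexp
  rw [uIcc_of_le hlt]
  exact ⟨by linarith [hr.2], by linarith [hr.1]⟩

/-- White-noise limit of the nonlinear Fokker–Planck coefficients `D_m` under OU noise:
as the correlation time `s → 0⁺`, `D_m(s) → 1/2` for `m = 0` and `D_m(s) → 0` for `m ≥ 1`. -/
theorem stmt_2 (t₀ t : ℝ) (hlt : t₀ < t) (m : ℕ) (g : ℝ → ℝ)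
    (hg : ContinuousOn g (Set.Icc t₀ t)) :
    Tendsto (fun s : ℝ => (1/(2*s)) * ∫ t₁ in t₀..t,
        Real.exp (-(t - t₁)/s) * Real.exp (∫ u in t₁..t, g u) * (t - t₁)^m)
      (𝓝[>] 0) (𝓝 (if m = 0 then (1/2 : ℝ) else 0)) := by
  set h : ℝ → ℝ := fun r => exp (∫ u in (t - r)..t, g u) with h_def
  have hrepr : ∀ s > 0, (1/(2*s)) * ∫ t₁ in t₀..t,
        exp (-(t - t₁)/s) * exp (∫ u in t₁..t, g u) * (t - t₁)^m
      = s ^ m / 2 * ∫ v in Ioi 0, exp (-v) * (Icc 0 (t - t₀)).indicator h (s * v) * v ^ m := by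
    intro s hs
    have hsub := intervalIntegral.integral_comp_sub_left
      (fun r => exp (-r / s) * h r * r ^ m) (a := t₀) (b := t) t
    simp only [h_def, sub_sub_cancel, sub_self] at hsub
    rw [hsub, intervalIntegral_eq_integral_Ioi_indicator (sub_pos.2 hlt).le, ← h_def,
      integral_Ioi_exp_neg_div_mul_pow hs]
    field_simp
    ring
  have hlim := ((continuous_pow m).div_const 2).continuousWithinAt (s := Ioi 0) (x := 0)
    |>.tendsto |>.mul <| tendsto_integral_exp_neg_mul_indicator_comp_mul_pow (sub_pos.2 hlt)
      (continuousOn_exp_integral_sub_left hlt.le hg) m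
  refine (hlim.congr' (eventually_nhdsWithin_of_forall fun s hs => (hrepr s hs).symm)).trans ?_
  rcases m with _ | m <;> simp
end

section
/- Let V : ℝ → ℝ be twice continuously differentiable and let σ, A : ℝ → ℝ be twice continuously differentiable with σ(x) > 0 and A(x) > 0 for all x. Fix x₀ ∈ ℝ and define p₀(x) := (1/(σ(x)A(x))) · exp(−∫_{x₀}^x V'(y)/(σ(y)²A(y)) dy). Then for every x ∈ ℝ, (V'(x) − σ'(x)σ(x)A(x)) · p₀(x) + (d/dx)[σ(x)²A(x)p₀(x)] = 0; in particular, p₀ satisfies the stationary equation (d/dx){[V'(x) − σ'(x)σ(x)A(x)]p₀(x)} + (d²/dx²)[σ(x)²A(x)p₀(x)] = 0. -/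
/-!
With `F(x) = ∫_{x₀}^x V'/(σ²A)`, the diffusion flux `σ²A·p₀` equals `σ·exp(-F)`, whose derivative
is `σ'·exp(-F) - σ·F'·exp(-F) = (σ'σA - V')·p₀`; this is the zero-flux identity, and
differentiating it once more gives the stationary equation.
-/

open Real

/-- The zero-flux stationary density `p₀`, with the drift `V'` replaced by an arbitrary `v`. -/
noncomputable def stationaryDensity (v σ A : ℝ → ℝ) (x₀ x : ℝ) : ℝ :=
  (1 / (σ x * A x)) * exp (-∫ y in x₀..x, v y / ((σ y) ^ 2 * A y))

theorem hasDerivAt_exp_neg_integral {g : ℝ → ℝ} (hg : Continuous g) (a x : ℝ) :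
    HasDerivAt (fun y => exp (-∫ t in a..y, g t)) (exp (-∫ t in a..x, g t) * -g x) x :=
  (hg.integral_hasStrictDerivAt a x).hasDerivAt.neg.exp

section StationaryDensity

variable {v σ A : ℝ → ℝ} {x₀ : ℝ}

theorem sq_mul_mul_stationaryDensity {x : ℝ} (hσ : σ x ≠ 0) (hA : A x ≠ 0) :
    σ x ^ 2 * A x * stationaryDensity v σ A x₀ x
      = σ x * exp (-∫ y in x₀..x, v y / ((σ y) ^ 2 * A y)) := by
  unfold stationaryDensity
  field_simp

theorem hasDerivAt_sq_mul_mul_stationaryDensity (hv : Continuous v)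
    (hσ : Differentiable ℝ σ) (hA : Continuous A) (hσ0 : ∀ y, σ y ≠ 0) (hA0 : ∀ y, A y ≠ 0)
    (x : ℝ) :
    HasDerivAt (fun y => σ y ^ 2 * A y * stationaryDensity v σ A x₀ y)
      (-((v x - deriv σ x * σ x * A x) * stationaryDensity v σ A x₀ x)) x := by
  have hg : Continuous fun y => v y / ((σ y) ^ 2 * A y) :=
    hv.div ((hσ.continuous.pow 2).mul hA) fun y => mul_ne_zero (pow_ne_zero 2 (hσ0 y)) (hA0 y)
  have hflux : (fun y => σ y ^ 2 * A y * stationaryDensity v σ A x₀ y)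
      = fun y => σ y * exp (-∫ t in x₀..y, v t / ((σ t) ^ 2 * A t)) :=
    funext fun y => sq_mul_mul_stationaryDensity (hσ0 y) (hA0 y)
  rw [hflux]
  refine ((hσ x).hasDerivAt.mul (hasDerivAt_exp_neg_integral hg x₀ x)).congr_deriv ?_
  unfold stationaryDensity
  field_simp [hσ0 x, hA0 x]
  ring

end StationaryDensity

/-- Closed-form solution of the stationary nonlinear Fokker–Planck equation: for `V` twice
continuously differentiable and `σ, A` twice continuously differentiable and positive,
`p₀(x) = (1/(σ(x)A(x)))·exp(-∫_{x₀}^x V'(y)/(σ(y)²A(y)) dy)` has zero probability flux,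
`(V'(x) - σ'(x)σ(x)A(x))p₀(x) + d/dx[σ(x)²A(x)p₀(x)] = 0`, and in particular satisfies the
stationary equation
`d/dx{[V'(x) - σ'(x)σ(x)A(x)]p₀(x)} + d²/dx²[σ(x)²A(x)p₀(x)] = 0`. -/
theorem stmt_7 (V σ A : ℝ → ℝ)
    (hV : ContDiff ℝ 2 V) (hσ : ContDiff ℝ 2 σ) (hA : ContDiff ℝ 2 A)
    (hσpos : ∀ x, 0 < σ x) (hApos : ∀ x, 0 < A x) (x₀ : ℝ)
    (p₀ : ℝ → ℝ)
    (hp₀ : ∀ x, p₀ x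
      = (1/(σ x * A x)) * Real.exp (-∫ y in x₀..x, deriv V y / ((σ y)^2 * A y))) :
    ∀ x : ℝ,
      ((deriv V x - deriv σ x * σ x * A x) * p₀ x
          + deriv (fun y => (σ y)^2 * A y * p₀ y) x = 0)
      ∧ (deriv (fun y => (deriv V y - deriv σ y * σ y * A y) * p₀ y) x
          + deriv (deriv (fun y => (σ y)^2 * A y * p₀ y)) x = 0) := by
  have hp : p₀ = stationaryDensity (deriv V) σ A x₀ := funext hp₀
  subst hp
  have hflux : deriv (fun y => σ y ^ 2 * A y * stationaryDensity (deriv V) σ A x₀ y)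
      = fun x => -((deriv V x - deriv σ x * σ x * A x) * stationaryDensity (deriv V) σ A x₀ x) :=
    funext fun x => (hasDerivAt_sq_mul_mul_stationaryDensity (hV.continuous_deriv one_le_two)
      (hσ.differentiable two_ne_zero) hA.continuous (fun y => (hσpos y).ne')
      (fun y => (hApos y).ne') x).deriv
  intro x
  rw [hflux, deriv.fun_neg]
  constructor <;> ring
end

section
/- Let V : ℝ → ℝ be continuously differentiable and let σ, A : ℝ → ℝ be continuously differentiable with σ(x) > 0 and A(x) > 0 for all x. Fix x₀ ∈ ℝ and define p₀(x) := (1/(σ(x)A(x))) · exp(−∫_{x₀}^x V'(y)/(σ(y)²A(y)) dy). Then p₀ is differentiable, and for every x ∈ ℝ, p₀'(x) = 0 if and only if V'(x) + σ(x)·(d/dx)[σ(x)A(x)] = 0. -/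
/-!
Writing `g = σ A` and `F' = V' / (σ² A)`, the density is `p₀ = g⁻¹ · exp (-F)`, so
`p₀' = -(exp (-F) / g²) · (g' + g F')`. The prefactor never vanishes and `g F' = V' / σ`,
hence `p₀' = 0` exactly when `g' + V' / σ = 0`, i.e. when `V' + σ g' = 0`.
-/

open Real

theorem hasDerivAt_inv_mul_exp_neg {g F : ℝ → ℝ} {g' f x : ℝ} (hg : HasDerivAt g g' x)
    (hgx : g x ≠ 0) (hF : HasDerivAt F f x) :
    HasDerivAt (fun y => (g y)⁻¹ * exp (-F y)) (-(exp (-F x) / g x ^ 2) * (g' + g x * f)) x := by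
  refine ((hg.inv hgx).mul hF.neg.exp).congr_deriv ?_
  simp only [Pi.inv_apply, Pi.neg_apply]
  field_simp
  ring

theorem neg_exp_div_sq_mul_eq_zero_iff {g c a : ℝ} (hg : g ≠ 0) :
    -(exp c / g ^ 2) * a = 0 ↔ a = 0 := by
  have : exp c / g ^ 2 ≠ 0 := div_ne_zero (exp_pos c).ne' (pow_ne_zero 2 hg)
  simp [this]

theorem add_mul_mul_div_sq_mul_eq_zero_iff {s a v d : ℝ} (hs : s ≠ 0) (ha : a ≠ 0) :
    d + s * a * (v / (s ^ 2 * a)) = 0 ↔ v + s * d = 0 := by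
  have hsa : s * a * (v / (s ^ 2 * a)) = v / s := by field_simp
  rw [hsa, ← mul_left_inj' hs, add_mul, div_mul_cancel₀ v hs, zero_mul, add_comm, mul_comm]

/-- Critical points of the stationary PDF in the multiplicative-noise case: for `V` C¹ and
`σ, A` C¹ and positive, the density
`p₀(x) = (1/(σ(x)A(x)))·exp(-∫_{x₀}^x V'(y)/(σ(y)²A(y)) dy)` is differentiable, and
`p₀'(x) = 0` iff `V'(x) + σ(x)·d/dx[σ(x)A(x)] = 0`. -/
theorem stmt_8 (V σ A : ℝ → ℝ)
    (hV : ContDiff ℝ 1 V) (hσ : ContDiff ℝ 1 σ) (hA : ContDiff ℝ 1 A)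
    (hσpos : ∀ x, 0 < σ x) (hApos : ∀ x, 0 < A x) (x₀ : ℝ)
    (p₀ : ℝ → ℝ)
    (hp₀ : ∀ x, p₀ x
      = (1/(σ x * A x)) * Real.exp (-∫ y in x₀..x, deriv V y / ((σ y)^2 * A y))) :
    Differentiable ℝ p₀
    ∧ ∀ x : ℝ, (deriv p₀ x = 0
        ↔ deriv V x + σ x * deriv (fun y => σ y * A y) x = 0) := by
  have hσA (x : ℝ) : σ x * A x ≠ 0 := (mul_pos (hσpos x) (hApos x)).ne'
  have hf : Continuous fun y => deriv V y / (σ y ^ 2 * A y) :=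
    (hV.continuous_deriv le_rfl).div ((hσ.continuous.pow 2).mul hA.continuous)
      fun y => (mul_pos (pow_pos (hσpos y) 2) (hApos y)).ne'
  have hg : Differentiable ℝ fun y => σ y * A y :=
    (hσ.differentiable one_ne_zero).mul (hA.differentiable one_ne_zero)
  have hp : p₀ = fun x => (σ x * A x)⁻¹ * exp (-∫ y in x₀..x, deriv V y / (σ y ^ 2 * A y)) :=
    funext fun x => by rw [hp₀, one_div]
  have hP (x : ℝ) := hp ▸ hasDerivAt_inv_mul_exp_neg (hg x).hasDerivAt (hσA x)
    (hf.integral_hasStrictDerivAt x₀ x).hasDerivAt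
  refine ⟨fun x => (hP x).differentiableAt, fun x => ?_⟩
  rw [(hP x).deriv, neg_exp_div_sq_mul_eq_zero_iff (hσA x),
    add_mul_mul_div_sq_mul_eq_zero_iff (hσpos x).ne' (hApos x).ne']
end

section
/- Let V : ℝ → ℝ be continuously differentiable, let σ > 0 be a constant, and let A : ℝ → ℝ be continuously differentiable with A(x) > 0 for all x. Fix x₀ ∈ ℝ and define p₀(x) := (1/(σA(x))) · exp(−∫_{x₀}^x V'(y)/(σ²A(y)) dy). Then p₀ is differentiable, and for every x ∈ ℝ, p₀'(x) = 0 if and only if V'(x) + σ²A'(x) = 0. -/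
/-!
Writing `p₀ = exp (-F) / a` with `a = σ A` and `F' = V' / (σ² A)`, the quotient rule gives
`p₀' = -(exp (-F) / a²) · (a' + a F')`, and `a' + a F' = (V' + σ² A') / σ`.
Since the prefactor never vanishes, `p₀'` vanishes exactly where `V' + σ² A'` does.
-/

open Real

section

variable {a F : ℝ → ℝ} {a' g x : ℝ}

theorem hasDerivAt_one_div_mul_exp_neg (ha : HasDerivAt a a' x) (ha0 : a x ≠ 0)
    (hF : HasDerivAt F g x) :
    HasDerivAt (fun x => 1 / a x * exp (-F x)) (-(exp (-F x) / a x ^ 2) * (a' + a x * g)) x := by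
  have h : HasDerivAt (fun x => (a x)⁻¹ * exp (-F x)) _ x := (ha.inv ha0).mul hF.neg.exp
  simp only [Pi.inv_apply, Pi.neg_apply] at h
  simp only [one_div]
  convert h using 1
  field_simp
  ring

theorem deriv_one_div_mul_exp_neg_eq_zero_iff (ha : HasDerivAt a a' x) (ha0 : a x ≠ 0)
    (hF : HasDerivAt F g x) :
    deriv (fun x => 1 / a x * exp (-F x)) x = 0 ↔ a' + a x * g = 0 := by
  have hc : -(exp (-F x) / a x ^ 2) ≠ 0 := neg_ne_zero.2 (by positivity)
  rw [(hasDerivAt_one_div_mul_exp_neg ha ha0 hF).deriv, mul_eq_zero, or_iff_right hc]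

end

/-- Peak drift for additive colored noise: for `V` C¹, constant `σ > 0`, and `A` C¹ positive,
the density `p₀(x) = (1/(σA(x)))·exp(-∫_{x₀}^x V'(y)/(σ²A(y)) dy)` is differentiable and
`p₀'(x) = 0` iff `V'(x) + σ²A'(x) = 0`. -/
theorem stmt_9 (V A : ℝ → ℝ) (σ : ℝ) (hσ : 0 < σ)
    (hV : ContDiff ℝ 1 V) (hA : ContDiff ℝ 1 A) (hApos : ∀ x, 0 < A x) (x₀ : ℝ)
    (p₀ : ℝ → ℝ)
    (hp₀ : ∀ x, p₀ x
      = (1/(σ * A x)) * Real.exp (-∫ y in x₀..x, deriv V y / (σ^2 * A y))) :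
    Differentiable ℝ p₀
    ∧ ∀ x : ℝ, (deriv p₀ x = 0 ↔ deriv V x + σ^2 * deriv A x = 0) := by
  obtain rfl : p₀ = _ := funext hp₀
  have hσA : ∀ x, HasDerivAt (fun x => σ * A x) (σ * deriv A x) x := fun x =>
    ((hA.differentiable one_ne_zero x).hasDerivAt).const_mul σ
  have hσA0 : ∀ x, σ * A x ≠ 0 := fun x => (mul_pos hσ (hApos x)).ne'
  have hg : Continuous fun y => deriv V y / (σ ^ 2 * A y) :=
    (hV.continuous_deriv le_rfl).div (continuous_const.mul hA.continuous)
      fun y => (mul_pos (pow_pos hσ 2) (hApos y)).ne'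
  have hF : ∀ x, HasDerivAt (fun x => ∫ y in x₀..x, deriv V y / (σ ^ 2 * A y))
      (deriv V x / (σ ^ 2 * A x)) x := fun x =>
    (hg.integral_hasStrictDerivAt x₀ x).hasDerivAt
  refine ⟨fun x => (hasDerivAt_one_div_mul_exp_neg (hσA x) (hσA0 x) (hF x)).differentiableAt,
    fun x => ?_⟩
  have hcrit : σ * deriv A x + σ * A x * (deriv V x / (σ ^ 2 * A x))
      = (deriv V x + σ ^ 2 * deriv A x) / σ := by
    field_simp [(hApos x).ne']
    ring
  rw [deriv_one_div_mul_exp_neg_eq_zero_iff (hσA x) (hσA0 x) (hF x), hcrit,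
    div_eq_zero_iff, or_iff_left hσ.ne']
end

section
/- Let a, x̂, σ ∈ ℝ, s > 0, and R < 1/s. Define Ṽ'(x) := x³ − (1−a)x − a x̂, ζ(x) := (1−a) − 3x², and A₂(x) := (1/2) Σ_{m=0}^{2} [s(ζ(x) − R)]^m/(1 − sR)^{m+1}. Then for every x ∈ ℝ, Ṽ'(x) + σ²·A₂'(x) = c₃(R)·x³ − c₁(R)·x − a x̂, where c₁(R) = (1−a) + (3σ²s/(1 − sR)²)·[1 + 2s(1 − a − R)/(1 − sR)] and c₃(R) = 1 + 18σ²s²/(1 − sR)³. -/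
/-!
With `u = s(ζ(y) - R)` and `d = 1/(1 - sR)`, `A₂ = (d + u d² + u² d³)/2`, so the chain rule gives
`A₂'(x) = -3 s x d² (1 + 2 u d)`. Since `u` is quadratic in `x`, adding `σ² A₂'` to `Ṽ'` leaves a
depressed cubic, whose coefficients are read off by treating `d` as an independent variable.
-/

open Finset

theorem hasDerivAt_sum_range_pow_div (n : ℕ) (D u : ℝ) :
    HasDerivAt (fun v => ∑ m ∈ range n, v ^ m / D ^ (m + 1))
      (∑ m ∈ range n, m * u ^ (m - 1) / D ^ (m + 1)) u :=
  HasDerivAt.fun_sum fun m _ => (hasDerivAt_pow m u).div_const _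

theorem hasDerivAt_A₂ (a s R x : ℝ) :
    HasDerivAt (fun y : ℝ => (1/2) * ∑ m ∈ range 3,
        (s * (((1 - a) - 3 * y ^ 2) - R)) ^ m / (1 - s * R) ^ (m + 1))
      (-(3 * s * x) * (1 / (1 - s * R) ^ 2
        + 2 * s * (((1 - a) - 3 * x ^ 2) - R) / (1 - s * R) ^ 3)) x := by
  have hu : HasDerivAt (fun y : ℝ => s * (((1 - a) - 3 * y ^ 2) - R)) (s * -(3 * (2 * x))) x := by
    simpa using ((((hasDerivAt_pow 2 x).const_mul 3).const_sub (1 - a)).sub_const R).const_mul s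
  refine (((hasDerivAt_sum_range_pow_div 3 (1 - s * R) _).const_mul (1/2)).comp x hu).congr_deriv ?_
  simp only [sum_range_succ, sum_range_zero]
  push_cast
  ring

theorem stmt_11_general (a xhat σ s R : ℝ) :
    ∀ x : ℝ,
      (x^3 - (1 - a)*x - a*xhat)
        + σ^2 * deriv (fun y : ℝ => (1/2) * ∑ m ∈ Finset.range 3,
            (s*(((1 - a) - 3*y^2) - R))^m / (1 - s*R)^(m+1)) x
      = (1 + 18*σ^2*s^2/(1 - s*R)^3) * x^3
        - ((1 - a) + (3*σ^2*s/(1 - s*R)^2) * (1 + 2*s*(1 - a - R)/(1 - s*R))) * x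
        - a*xhat := by
  intro x
  rw [(hasDerivAt_A₂ a s R x).deriv]
  generalize 1 - s * R = D
  ring

/-- Critical-point equation of the controlled bistable system reduces to a depressed cubic:
with `Ṽ'(x) = x³ - (1-a)x - a·x̂`, `ζ(x) = (1-a) - 3x²`, and
`A₂(x) = (1/2)·Σ_{m=0}^{2} [s(ζ(x)-R)]^m/(1-sR)^{m+1}`, one has
`Ṽ'(x) + σ²A₂'(x) = c₃(R)x³ - c₁(R)x - a·x̂` with the explicit coefficients below. -/
theorem stmt_11 (a xhat σ s R : ℝ) (hs : 0 < s) (hR : R < 1/s) :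
    ∀ x : ℝ,
      (x^3 - (1 - a)*x - a*xhat)
        + σ^2 * deriv (fun y : ℝ => (1/2) * ∑ m ∈ Finset.range 3,
            (s*(((1 - a) - 3*y^2) - R))^m / (1 - s*R)^(m+1)) x
      = (1 + 18*σ^2*s^2/(1 - s*R)^3) * x^3
        - ((1 - a) + (3*σ^2*s/(1 - s*R)^2) * (1 + 2*s*(1 - a - R)/(1 - s*R))) * x
        - a*xhat :=
  stmt_11_general a xhat σ s R
end
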